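/- For all non-negative integers i and j, β(c^i d c^j) = C(i+j+2, i+1) − 1. -/

import Mathlib

open scoped TensorProduct

/-- cd-monomials: `false` is the letter `c`, `true` is the letter `d`. -/
abbrev Mon := List Bool

/-- The polynomial algebra `F = ℚ⟨c,d⟩`. -/
abbrev F := MonoidAlgebra ℚ (FreeMonoid Bool)

noncomputable def mono (w : Mon) : F := MonoidAlgebra.single (FreeMonoid.ofList w) 1

noncomputable def cF : F := mono [false]
noncomputable def dF : F := mono [true]

noncomputable def gLetter : Bool → F
  | false => dF
  | true  => cF * dF

noncomputable def gMon : Mon → F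
  | [] => 0
  | a :: t => gLetter a * mono t + mono [a] * gMon t

/-- The derivation `G` with `G c = d`, `G d = cd`. -/
noncomputable def G : F →ₗ[ℚ] F :=
  (Finsupp.lsum ℚ fun w => LinearMap.toSpanSingleton ℚ F (gMon (FreeMonoid.toList w))).comp
    (MonoidAlgebra.coeffLinearEquiv ℚ).toLinearMap

/-- `Psi n` is the cd-index of the Boolean lattice of rank `n+1`. -/
noncomputable def Psi : ℕ → F
  | 0 => 1
  | n+1 => Psi n * cF + G (Psi n)

/-- degree of a cd-monomial (`c` has degree 1, `d` degree 2). -/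
def deg (w : Mon) : ℕ := w.length + w.count true

/-- `beta v` : coefficient of `v` in the cd-index of the Boolean lattice of rank `deg v + 1`. -/
noncomputable def beta (w : Mon) : ℚ := (Psi (deg w)).coeff (FreeMonoid.ofList w)

-- basics
lemma ofList_inj {u v : Mon} (h : FreeMonoid.ofList u = FreeMonoid.ofList v) : u = v :=
  FreeMonoid.ofList.injective h

lemma mul_ofList (a : FreeMonoid Bool) (v : Mon) :
    a * FreeMonoid.ofList v = FreeMonoid.ofList (FreeMonoid.toList a ++ v) := rfl

lemma ofList_mul (u : Mon) (a : FreeMonoid Bool) :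
    FreeMonoid.ofList u * a = FreeMonoid.ofList (u ++ FreeMonoid.toList a) := rfl

lemma mono_mul (u v : Mon) : mono u * mono v = mono (u ++ v) := by
  simp only [mono, MonoidAlgebra.single_mul_single, one_mul]
  rfl

lemma mono_apply (u v : Mon) :
    (mono u).coeff (FreeMonoid.ofList v) = if u = v then 1 else 0 := by
  by_cases h : u = v
  · subst h; rw [mono, if_pos rfl]; exact Finsupp.single_eq_same
  · rw [mono, if_neg h]; exact Finsupp.single_eq_of_ne' (fun hh => h (ofList_inj hh))

lemma mulc_apply (p : F) (w : Mon) :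
    (p * cF).coeff (FreeMonoid.ofList (w ++ [false])) = p.coeff (FreeMonoid.ofList w) := by
  rw [cF, mono, show (p * MonoidAlgebra.single (FreeMonoid.ofList [false]) (1:ℚ)).coeff
        (FreeMonoid.ofList (w ++ [false])) = p.coeff (FreeMonoid.ofList w) * 1 from
      MonoidAlgebra.coeff_mul_single_eq_coeff_mul _ ?_, mul_one]
  intro a _
  constructor
  · intro h
    rw [mul_ofList] at h
    have h2 := List.append_cancel_right (ofList_inj h)
    rw [← h2]; rfl
  · rintro rfl; rfl

lemma mulc_apply_true (p : F) (w : Mon) :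
    (p * cF).coeff (FreeMonoid.ofList (w ++ [true])) = 0 := by
  rw [cF, mono]
  apply MonoidAlgebra.mul_single_apply_of_not_exists_mul
  rintro ⟨d, hd⟩
  rw [mul_ofList] at hd
  have := ofList_inj hd
  have h2 := (List.append_inj' this rfl).2
  simp at h2

lemma cons_mul_apply (a : Bool) (q : F) (w : Mon) :
    (mono [a] * q).coeff (FreeMonoid.ofList (a :: w)) = q.coeff (FreeMonoid.ofList w) := by
  rw [mono, show (MonoidAlgebra.single (FreeMonoid.ofList [a]) (1:ℚ) * q).coeff
        (FreeMonoid.ofList (a :: w)) = 1 * q.coeff (FreeMonoid.ofList w) from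
      MonoidAlgebra.coeff_single_mul_eq_mul_coeff _ ?_, one_mul]
  intro x _
  constructor
  · intro h
    rw [ofList_mul] at h
    have := ofList_inj h
    simp only [List.singleton_append, List.cons.injEq] at this
    rw [← this.2]; rfl
  · rintro rfl; rfl

lemma cons_mul_apply_ne {a b : Bool} (h : a ≠ b) (q : F) (w : Mon) :
    (mono [a] * q).coeff (FreeMonoid.ofList (b :: w)) = 0 := by
  rw [mono]
  apply MonoidAlgebra.single_mul_apply_of_not_exists_mul
  rintro ⟨d, hd⟩
  rw [ofList_mul] at hd
  have := ofList_inj hd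
  simp only [List.singleton_append, List.cons.injEq] at this
  exact h this.1.symm

lemma cons_mul_apply_nil (a : Bool) (q : F) :
    (mono [a] * q).coeff (FreeMonoid.ofList []) = 0 := by
  rw [mono]
  apply MonoidAlgebra.single_mul_apply_of_not_exists_mul
  rintro ⟨d, hd⟩
  rw [ofList_mul] at hd
  have := ofList_inj hd
  simp at this

-- words
def Cw (n : ℕ) : Mon := List.replicate n false
def Ww (i j : ℕ) : Mon := Cw i ++ true :: Cw j

lemma Cw_succ (n : ℕ) : Cw (n+1) = false :: Cw n := rfl
lemma Ww_zero (j : ℕ) : Ww 0 j = true :: Cw j := rfl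
lemma Ww_succ (i j : ℕ) : Ww (i+1) j = false :: Ww i j := rfl
lemma Ww_snoc (i j : ℕ) : Ww i (j+1) = Ww i j ++ [false] := by
  simp [Ww, Cw, List.replicate_succ' (n := j)]
lemma Ww_zero_snoc (i : ℕ) : Ww i 0 = Cw i ++ [true] := rfl

lemma count_Cw (n : ℕ) : (Cw n).count true = 0 := by
  simp [Cw, List.count_replicate]
lemma count_Ww (i j : ℕ) : (Ww i j).count true = 1 := by simp [Ww, count_Cw, List.count_cons]

lemma Cw_inj {m n : ℕ} (h : Cw m = Cw n) : m = n := by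
  have := congrArg List.length h; simpa [Cw] using this

lemma Ww_inj : ∀ {a i : ℕ} {b j : ℕ}, Ww a b = Ww i j → a = i ∧ b = j := by
  intro a
  induction a with
  | zero =>
    intro i b j h
    cases i with
    | zero =>
      rw [Ww_zero, Ww_zero] at h
      injection h with _ h2
      exact ⟨rfl, Cw_inj h2⟩
    | succ i' => rw [Ww_zero, Ww_succ] at h; simp at h
  | succ a' ih =>
    intro i b j h
    cases i with
    | zero => rw [Ww_succ, Ww_zero] at h; simp at h
    | succ i' =>
      rw [Ww_succ, Ww_succ] at h
      injection h with _ h2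
      obtain ⟨h1, h2⟩ := ih h2
      exact ⟨by rw [h1], h2⟩

lemma gMon_false (t : Mon) :
    gMon (false :: t) = mono (true :: t) + mono [false] * gMon t := by
  show gLetter false * mono t + mono [false] * gMon t = _
  rw [gLetter, dF, mono_mul]
  rfl

lemma gMon_true (t : Mon) :
    gMon (true :: t) = mono (false :: true :: t) + mono [true] * gMon t := by
  show gLetter true * mono t + mono [true] * gMon t = _
  rw [gLetter, cF, dF, mono_mul, mono_mul]
  rfl

lemma mono_apply_count {u w : Mon} (h : u.count true ≠ w.count true) :
    (mono u).coeff (FreeMonoid.ofList w) = 0 := by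
  rw [mono_apply, if_neg]; rintro rfl; exact h rfl

lemma gMon_count_zero : ∀ (u w : Mon), w.count true = 0 → (gMon u).coeff (FreeMonoid.ofList w) = 0 := by
  intro u
  induction u with
  | nil => intro w _; simp [gMon]
  | cons a t ih =>
    intro w hw
    cases a with
    | false =>
      rw [gMon_false, MonoidAlgebra.coeff_add, Finsupp.add_apply, mono_apply_count (by simp [List.count_cons]; omega)]
      cases w with
      | nil => rw [cons_mul_apply_nil]; ring
      | cons b w' =>
        cases b with
        | true => simp [List.count_cons] at hw
        | false =>
          rw [cons_mul_apply, ih w' (by simpa [List.count_cons] using hw)]; ring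
    | true =>
      rw [gMon_true, MonoidAlgebra.coeff_add, Finsupp.add_apply, mono_apply_count (by simp [List.count_cons]; omega)]
      cases w with
      | nil => rw [cons_mul_apply_nil]; ring
      | cons b w' =>
        cases b with
        | true => simp [List.count_cons] at hw
        | false => rw [cons_mul_apply_ne (by simp)]; ring

lemma gMon_count_lt : ∀ (u w : Mon), w.count true < u.count true →
    (gMon u).coeff (FreeMonoid.ofList w) = 0 := by
  intro u
  induction u with
  | nil => intro w h; simp at h
  | cons a t ih =>
    intro w hw
    cases a with
    | false =>
      rw [gMon_false, MonoidAlgebra.coeff_add, Finsupp.add_apply, mono_apply_count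
        (by simp [List.count_cons] at hw ⊢; omega)]
      cases w with
      | nil => rw [cons_mul_apply_nil]; ring
      | cons b w' =>
        cases b with
        | true =>
          rw [cons_mul_apply_ne (by simp)]; ring
        | false =>
          rw [cons_mul_apply, ih w' (by simp [List.count_cons] at hw ⊢; omega)]; ring
    | true =>
      rw [gMon_true, MonoidAlgebra.coeff_add, Finsupp.add_apply, mono_apply_count
        (by simp [List.count_cons] at hw ⊢; omega)]
      cases w with
      | nil => rw [cons_mul_apply_nil]; ring
      | cons b w' =>
        cases b with
        | false =>
          rw [cons_mul_apply_ne (by simp)]; ring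
        | true =>
          rw [cons_mul_apply, ih w' (by simp [List.count_cons] at hw ⊢; omega)]; ring

lemma Ww_eq_iff {a b i j : ℕ} : (Ww a b = Ww i j) ↔ (a = i ∧ b = j) := by
  constructor
  · exact Ww_inj
  · rintro ⟨rfl, rfl⟩; rfl

lemma gMon_C_apply : ∀ (m i j : ℕ), (gMon (Cw m)).coeff (FreeMonoid.ofList (Ww i j))
    = if m = i + j + 1 then 1 else 0 := by
  intro m
  induction m with
  | zero =>
    intro i j
    rw [if_neg (by omega)]
    show (gMon []).coeff _ = 0
    simp [gMon]
  | succ m ih =>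
    intro i j
    rw [Cw_succ, gMon_false, MonoidAlgebra.coeff_add, Finsupp.add_apply]
    have h1 : (mono (true :: Cw m)).coeff (FreeMonoid.ofList (Ww i j))
        = if i = 0 ∧ j = m then 1 else 0 := by
      rw [← Ww_zero, mono_apply]
      congr 1
      simp only [eq_iff_iff]
      constructor
      · intro h; obtain ⟨h1, h2⟩ := Ww_inj h; exact ⟨h1.symm, h2.symm⟩
      · rintro ⟨rfl, rfl⟩; rfl
    rw [h1]
    cases i with
    | zero =>
      rw [Ww_zero, cons_mul_apply_ne (by simp)]
      by_cases hj : j = m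
      · subst hj; norm_num
      · rw [if_neg (by tauto), if_neg (by omega)]; ring
    | succ i' =>
      rw [Ww_succ, cons_mul_apply, ih i' j, if_neg (by simp)]
      by_cases h : m = i' + j + 1
      · rw [if_pos h, if_pos (by omega)]; ring
      · rw [if_neg h, if_neg (by omega)]; ring

lemma gMon_W_apply : ∀ (a b i j : ℕ), (gMon (Ww a b)).coeff (FreeMonoid.ofList (Ww i j))
    = if i = a + 1 ∧ j = b then 1 else 0 := by
  intro a
  induction a with
  | zero =>
    intro b i j
    rw [Ww_zero, gMon_true, MonoidAlgebra.coeff_add, Finsupp.add_apply]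
    have h1 : (mono (false :: true :: Cw b)).coeff (FreeMonoid.ofList (Ww i j))
        = if i = 1 ∧ j = b then 1 else 0 := by
      rw [show (false :: true :: Cw b) = Ww 1 b from rfl, mono_apply]
      congr 1
      simp only [eq_iff_iff]
      constructor
      · intro h; obtain ⟨h1, h2⟩ := Ww_inj h; exact ⟨h1.symm, h2.symm⟩
      · rintro ⟨rfl, rfl⟩; rfl
    rw [h1]
    cases i with
    | zero =>
      rw [Ww_zero, cons_mul_apply, gMon_count_zero _ _ (count_Cw j)]
      norm_num
    | succ i' =>
      rw [Ww_succ, cons_mul_apply_ne (by simp), add_zero]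
  | succ a ih =>
    intro b i j
    rw [Ww_succ, gMon_false, MonoidAlgebra.coeff_add, Finsupp.add_apply]
    rw [mono_apply_count (by rw [count_Ww]; simp [List.count_cons, count_Ww])]
    cases i with
    | zero =>
      rw [Ww_zero, cons_mul_apply_ne (by simp), if_neg (by omega)]
      ring
    | succ i' =>
      rw [Ww_succ, cons_mul_apply, ih b i' j]
      by_cases h : i' = a + 1 ∧ j = b
      · rw [if_pos h, if_pos (by omega)]; ring
      · rw [if_neg h, if_neg (by omega)]; ring

lemma G_apply (p : F) (x : FreeMonoid Bool) :
    (G p).coeff x = ∑ u ∈ p.coeff.support, p.coeff u * (gMon (FreeMonoid.toList u)).coeff x := by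
  have hG : G p = p.coeff.sum fun u r => r • gMon (FreeMonoid.toList u) := by
    rfl
  rw [hG, Finsupp.sum, MonoidAlgebra.coeff_sum, Finsupp.finset_sum_apply]
  apply Finset.sum_congr rfl
  intro u _
  rw [MonoidAlgebra.coeff_smul, Finsupp.smul_apply, smul_eq_mul]

lemma G_apply_C (p : F) (n : ℕ) : (G p).coeff (FreeMonoid.ofList (Cw n)) = 0 := by
  rw [G_apply]
  apply Finset.sum_eq_zero
  intro u _
  rw [gMon_count_zero _ _ (count_Cw n), mul_zero]

lemma u_eq_iff (u : FreeMonoid Bool) (w : Mon) :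
    u = FreeMonoid.ofList w ↔ FreeMonoid.toList u = w := by
  constructor
  · rintro rfl; rfl
  · intro h; rw [← h]; rfl

lemma eq_Cw_of_count {u : Mon} (h : u.count true = 0) : u = Cw u.length := by
  rw [Cw, List.eq_replicate_iff]
  refine ⟨rfl, ?_⟩
  intro b hb
  cases b
  · rfl
  · exact absurd hb (List.count_eq_zero.mp h)

lemma eq_Ww_of_count : ∀ {u : Mon}, u.count true = 1 → ∃ a b, u = Ww a b := by
  intro u
  induction u with
  | nil => intro h; simp at h
  | cons x t ih =>
    intro h
    cases x with
    | true =>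
      have ht : t.count true = 0 := by simpa [List.count_cons] using h
      exact ⟨0, t.length, by rw [Ww_zero, ← eq_Cw_of_count ht]⟩
    | false =>
      have ht : t.count true = 1 := by simpa [List.count_cons] using h
      obtain ⟨a, b, rfl⟩ := ih ht
      exact ⟨a + 1, b, rfl⟩

lemma gMon_apply_W (i j : ℕ) (t : Mon) :
    (gMon t).coeff (FreeMonoid.ofList (Ww i j))
    = (if t = Cw (i + j + 1) then 1 else 0)
      + (if 1 ≤ i ∧ t = Ww (i - 1) j then 1 else 0) := by
  cases hcv : t.count true with
  | zero =>
    have hCw : t = Cw t.length := eq_Cw_of_count hcv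
    have hne : ¬ (1 ≤ i ∧ t = Ww (i - 1) j) := by
      rintro ⟨-, h2⟩
      rw [h2, count_Ww] at hcv
      omega
    rw [if_neg hne, add_zero, hCw, gMon_C_apply]
    have : (Cw t.length = Cw (i + j + 1)) ↔ (t.length = i + j + 1) :=
      ⟨fun h => Cw_inj h, fun h => by rw [h]⟩
    by_cases h : t.length = i + j + 1
    · rw [if_pos h, if_pos (this.mpr h)]
    · rw [if_neg h, if_neg (fun hh => h (this.mp hh))]
  | succ m =>
    cases m with
    | zero =>
      obtain ⟨a, b, rfl⟩ := eq_Ww_of_count hcv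
      rw [gMon_W_apply]
      have hne : ¬ (Ww a b = Cw (i + j + 1)) := by
        intro h2
        rw [h2, count_Cw] at hcv
        omega
      rw [if_neg hne, zero_add]
      by_cases h : i = a + 1 ∧ j = b
      · rw [if_pos h, if_pos ⟨by omega, by rw [h.2, show i - 1 = a from by omega]⟩]
      · rw [if_neg h, if_neg ?_]
        rintro ⟨hi1, h2⟩
        obtain ⟨e1, e2⟩ := Ww_inj h2
        exact h ⟨by omega, e2.symm⟩
    | succ m' =>
      rw [gMon_count_lt _ _ (by rw [count_Ww, hcv]; omega)]
      have h1 : ¬ (t = Cw (i + j + 1)) := by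
        intro h2; rw [h2, count_Cw] at hcv; omega
      have h2 : ¬ (1 ≤ i ∧ t = Ww (i - 1) j) := by
        rintro ⟨-, h2⟩; rw [h2, count_Ww] at hcv; omega
      rw [if_neg h1, if_neg h2, add_zero]

instance : DecidableEq (FreeMonoid Bool) :=
  fun a b => decidable_of_iff (FreeMonoid.toList a = FreeMonoid.toList b)
    ⟨fun h => FreeMonoid.toList.injective h, fun h => by rw [h]⟩

lemma sum_coeff (p : F) (w : Mon) :
    (∑ u ∈ p.coeff.support, if u = FreeMonoid.ofList w then p.coeff u else 0)
      = p.coeff (FreeMonoid.ofList w) := by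
  classical
  rw [Finset.sum_ite_eq' p.coeff.support (FreeMonoid.ofList w) (fun u => p.coeff u)]
  by_cases h : FreeMonoid.ofList w ∈ p.coeff.support
  · rw [if_pos h]
  · rw [if_neg h, Finsupp.notMem_support_iff.mp h]

lemma G_apply_W (p : F) (i j : ℕ) :
    (G p).coeff (FreeMonoid.ofList (Ww i j))
      = p.coeff (FreeMonoid.ofList (Cw (i + j + 1)))
        + (if 1 ≤ i then p.coeff (FreeMonoid.ofList (Ww (i - 1) j)) else 0) := by
  classical
  rw [G_apply]
  have step : ∀ u ∈ p.coeff.support, p.coeff u * (gMon (FreeMonoid.toList u)).coeff (FreeMonoid.ofList (Ww i j))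
      = (if u = FreeMonoid.ofList (Cw (i + j + 1)) then p.coeff u else 0)
        + (if 1 ≤ i then (if u = FreeMonoid.ofList (Ww (i - 1) j) then p.coeff u else 0) else 0) := by
    intro u _
    rw [gMon_apply_W, mul_add]
    congr 1
    · by_cases h : FreeMonoid.toList u = Cw (i + j + 1)
      · rw [if_pos h, mul_one, if_pos ((u_eq_iff _ _).mpr h)]
      · rw [if_neg h, mul_zero, if_neg (fun hh => h ((u_eq_iff _ _).mp hh))]
    · by_cases hi : 1 ≤ i
      · rw [if_pos hi]
        by_cases h : FreeMonoid.toList u = Ww (i - 1) j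
        · rw [if_pos ⟨hi, h⟩, mul_one, if_pos ((u_eq_iff _ _).mpr h)]
        · rw [if_neg (fun hh => h hh.2), mul_zero, if_neg (fun hh => h ((u_eq_iff _ _).mp hh))]
      · rw [if_neg hi, if_neg (fun hh => hi hh.1), mul_zero]
  rw [Finset.sum_congr rfl step, Finset.sum_add_distrib, sum_coeff]
  congr 1
  by_cases hi : 1 ≤ i
  · simp only [if_pos hi]
    exact sum_coeff p (Ww (i - 1) j)
  · simp only [if_neg hi]
    exact Finset.sum_const_zero

lemma Cw_snoc (n : ℕ) : Cw (n + 1) = Cw n ++ [false] := by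
  simp [Cw, List.replicate_succ' (n := n)]

lemma Psi_C : ∀ n, (Psi n).coeff (FreeMonoid.ofList (Cw n)) = 1 := by
  intro n
  induction n with
  | zero =>
    show (1 : F).coeff (FreeMonoid.ofList []) = 1
    rw [MonoidAlgebra.one_def]
    exact Finsupp.single_eq_same
  | succ n ih =>
    rw [show Psi (n + 1) = Psi n * cF + G (Psi n) from rfl, MonoidAlgebra.coeff_add, Finsupp.add_apply,
      Cw_snoc, mulc_apply, ih, ← Cw_snoc, G_apply_C, add_zero]

lemma Psi_W : ∀ n i j, i + j = n → (Psi (i + j + 2)).coeff (FreeMonoid.ofList (Ww i j))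
    = (Nat.choose (i + j + 2) (i + 1) : ℚ) - 1 := by
  intro n
  induction n with
  | zero =>
    rintro i j h
    obtain ⟨rfl, rfl⟩ : i = 0 ∧ j = 0 := by omega
    rw [show Psi (0 + 0 + 2) = Psi 1 * cF + G (Psi 1) from rfl, MonoidAlgebra.coeff_add, Finsupp.add_apply,
      G_apply_W, Psi_C, if_neg (by omega), Ww_zero_snoc, mulc_apply_true]
    norm_num
  | succ n ih =>
    rintro i j hij
    rw [show Psi (i + j + 2) = Psi (i + j + 1) * cF + G (Psi (i + j + 1)) from rfl,
      MonoidAlgebra.coeff_add, Finsupp.add_apply, G_apply_W, Psi_C]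
    cases j with
    | zero =>
      rw [Ww_zero_snoc, mulc_apply_true]
      cases i with
      | zero => omega
      | succ i' =>
        rw [if_pos (by omega), show i' + 1 - 1 = i' from rfl]
        have h1 : i' + 1 + 0 + 1 = i' + 0 + 2 := by omega
        rw [h1, ih i' 0 (by omega)]
        have e1 : (i' + 0 + 2).choose (i' + 1) = i' + 2 := by
          rw [show i' + 0 + 2 = (i' + 1) + 1 from by omega]
          exact Nat.choose_succ_self_right (i' + 1)
        have e2 : (i' + 1 + 0 + 2).choose (i' + 1 + 1) = i' + 3 := by
          rw [show i' + 1 + 0 + 2 = (i' + 2) + 1 from by omega]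
          exact Nat.choose_succ_self_right (i' + 2)
        rw [e1, e2]
        push_cast
        ring
    | succ j' =>
      rw [Ww_snoc, mulc_apply]
      have h1 : i + (j' + 1) + 1 = i + j' + 2 := by omega
      rw [h1, ih i j' (by omega)]
      cases i with
      | zero =>
        rw [if_neg (by omega)]
        have e1 : (0 + j' + 2).choose (0 + 1) = j' + 2 := by
          simp [Nat.choose_one_right]
        have e2 : (0 + (j' + 1) + 2).choose (0 + 1) = j' + 3 := by
          simp [Nat.choose_one_right]
        rw [e1, e2]
        push_cast
        ring
      | succ i' =>
        rw [if_pos (by omega), show i' + 1 - 1 = i' from rfl]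
        have T2 : (Psi (i' + 1 + j' + 2)).coeff (FreeMonoid.ofList (Ww i' (j' + 1)))
            = ((i' + (j' + 1) + 2).choose (i' + 1) : ℚ) - 1 := by
          rw [show i' + 1 + j' + 2 = i' + (j' + 1) + 2 from by omega]
          exact ih i' (j' + 1) (by omega)
        rw [T2]
        have hz : (i' + 1 + (j' + 1) + 2).choose (i' + 1 + 1)
            = (i' + (j' + 1) + 2).choose (i' + 1) + (i' + 1 + j' + 2).choose (i' + 1 + 1) := by
          rw [show i' + 1 + (j' + 1) + 2 = (i' + (j' + 1) + 2) + 1 from by omega,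
            Nat.choose_succ_succ' (i' + (j' + 1) + 2) (i' + 1)]
          congr 2
          omega
        rw [hz]
        push_cast
        ring

lemma deg_Ww (i j : ℕ) : deg (Ww i j) = i + j + 2 := by
  rw [deg, count_Ww]
  simp [Ww, Cw]
  omega


/-- For all `i, j ≥ 0`, `β(cⁱ d cʲ) = C(i+j+2, i+1) − 1`. -/
theorem beta_cdc (i j : ℕ) :
    beta (List.replicate i false ++ true :: List.replicate j false)
      = (Nat.choose (i + j + 2) (i + 1) : ℚ) - 1 := by
  show beta (Ww i j) = _
  rw [beta, deg_Ww]
  exact Psi_W (i + j) i j rfl
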